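/- Let P be a nonzero real 3×3 skew-symmetric matrix and a, b ∈ ℝ³ vectors with P b = 0 and b ≠ 0. Then ⟨b, P a + g(a) b⟩ = 0 if and only if P a + g(a) b = 0. (If dS ≠ 0 at a regular point x, then dS/dt = 0 along the metriplectic system exactly when x is an equilibrium of the system.) -/

import Mathlib

/-!
Skew-symmetry of `P` and `P b = 0` give `⟨b, P a⟩ = 0`, so `dS/dt = ⟨b, g(a) b⟩ =
⟨a, b⟩² - ‖a‖² ‖b‖²`. By the equality case of Cauchy–Schwarz this vanishes only when `a = r b`,
and then both `P a = r P b` and `g(a) b = r² g(b) b` are zero.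
-/

open Matrix RealInnerProductSpace

/-- The dissipative tensor `g(a) = a ⊗ a − ‖a‖² I` of the paper, as a 3×3 matrix;
it acts by `g(a) v = ⟨a, v⟩ a − ‖a‖² v`. -/
noncomputable def gmat (a : EuclideanSpace ℝ (Fin 3)) : Matrix (Fin 3) (Fin 3) ℝ :=
  Matrix.vecMulVec a a - (‖a‖ ^ 2) • 1

theorem Matrix.dotProduct_mulVec_eq_zero_of_transpose_eq_neg {n R : Type*} [Fintype n]
    [CommRing R] {P : Matrix n n R} (hP : Pᵀ = -P) {b : n → R} (hb : P *ᵥ b = 0) (a : n → R) :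
    b ⬝ᵥ P *ᵥ a = 0 := by
  rw [dotProduct_mulVec, ← mulVec_transpose, hP, neg_mulVec, hb, neg_zero, zero_dotProduct]

theorem EuclideanSpace.real_inner_eq_dotProduct {ι : Type*} [Fintype ι]
    (x y : EuclideanSpace ℝ ι) : ⟪x, y⟫ = x ⬝ᵥ y := by
  rw [EuclideanSpace.inner_eq_star_dotProduct, star_trivial, dotProduct_comm]

theorem exists_eq_smul_of_real_inner_sq_eq {F : Type*} [NormedAddCommGroup F]
    [InnerProductSpace ℝ F] {x y : F} (hx : x ≠ 0) (h : ⟪x, y⟫ ^ 2 = ‖x‖ ^ 2 * ‖y‖ ^ 2) :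
    ∃ r : ℝ, y = r • x := by
  have habs : ‖⟪x, y⟫‖ = ‖x‖ * ‖y‖ :=
    (sq_eq_sq₀ (norm_nonneg _) (by positivity)).1 (by rw [Real.norm_eq_abs, sq_abs, h, mul_pow])
  exact Or.resolve_left (((norm_inner_eq_norm_tfae ℝ x y).out 0 2).1 habs) hx

theorem gmat_mulVec (a : EuclideanSpace ℝ (Fin 3)) (v : Fin 3 → ℝ) :
    gmat a *ᵥ v = (a ⬝ᵥ v) • a - ‖a‖ ^ 2 • v := by
  rw [gmat, sub_mulVec, vecMulVec_mulVec, smul_mulVec, one_mulVec, op_smul_eq_smul]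

theorem gmat_mulVec_self (a : EuclideanSpace ℝ (Fin 3)) : gmat a *ᵥ a = 0 := by
  rw [gmat_mulVec, ← EuclideanSpace.real_inner_eq_dotProduct, real_inner_self_eq_norm_sq,
    sub_self]

theorem gmat_smul (r : ℝ) (a : EuclideanSpace ℝ (Fin 3)) : gmat (r • a) = r ^ 2 • gmat a := by
  rw [gmat, gmat, norm_smul, mul_pow, Real.norm_eq_abs, sq_abs, WithLp.ofLp_smul, smul_vecMulVec,
    vecMulVec_smul, smul_sub, smul_smul, smul_smul, sq]

theorem dotProduct_gmat_mulVec (a b : EuclideanSpace ℝ (Fin 3)) :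
    b ⬝ᵥ gmat a *ᵥ b = ⟪a, b⟫ ^ 2 - ‖a‖ ^ 2 * ‖b‖ ^ 2 := by
  rw [gmat_mulVec, dotProduct_sub, dotProduct_smul, dotProduct_smul, smul_eq_mul, smul_eq_mul,
    ← EuclideanSpace.real_inner_eq_dotProduct, ← EuclideanSpace.real_inner_eq_dotProduct,
    ← EuclideanSpace.real_inner_eq_dotProduct, real_inner_self_eq_norm_sq, real_inner_comm b a]
  ring

theorem dS_dt_zero_iff_equilibrium_general (P : Matrix (Fin 3) (Fin 3) ℝ) (hP : Pᵀ = -P)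
    (a b : EuclideanSpace ℝ (Fin 3)) (hb : P *ᵥ b = 0) (hb0 : b ≠ 0) :
    ⟪b, (WithLp.toLp 2 (P *ᵥ a + gmat a *ᵥ b) : EuclideanSpace ℝ (Fin 3))⟫ = 0 ↔
      P *ᵥ a + gmat a *ᵥ b = 0 := by
  have hdS : ⟪b, (WithLp.toLp 2 (P *ᵥ a + gmat a *ᵥ b) : EuclideanSpace ℝ (Fin 3))⟫ =
      ⟪b, a⟫ ^ 2 - ‖b‖ ^ 2 * ‖a‖ ^ 2 := by
    rw [EuclideanSpace.real_inner_eq_dotProduct, WithLp.ofLp_toLp, dotProduct_add,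
      dotProduct_mulVec_eq_zero_of_transpose_eq_neg hP hb, dotProduct_gmat_mulVec,
      real_inner_comm]
    ring
  refine ⟨fun h => ?_, fun h => by rw [h, WithLp.toLp_zero, inner_zero_right]⟩
  obtain ⟨r, rfl⟩ := exists_eq_smul_of_real_inner_sq_eq hb0 (sub_eq_zero.1 (hdS ▸ h))
  rw [WithLp.ofLp_smul, mulVec_smul, hb, smul_zero, zero_add, gmat_smul, smul_mulVec,
    gmat_mulVec_self, smul_zero]

/-- If `dS ≠ 0` at a regular point, then `dS/dt = 0` along the metriplectic system
exactly at equilibria of the system. -/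
theorem dS_dt_zero_iff_equilibrium (P : Matrix (Fin 3) (Fin 3) ℝ) (hP : Pᵀ = -P)
    (hP0 : P ≠ 0) (a b : EuclideanSpace ℝ (Fin 3)) (hb : P *ᵥ b = 0) (hb0 : b ≠ 0) :
    ⟪b, (WithLp.toLp 2 (P *ᵥ a + gmat a *ᵥ b) : EuclideanSpace ℝ (Fin 3))⟫ = 0 ↔
      P *ᵥ a + gmat a *ᵥ b = 0 :=
  dS_dt_zero_iff_equilibrium_general P hP a b hb hb0
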